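/- arXiv:1701.03961 — 2 statements merged into one kernel-verified Lean document; each statement's English description precedes it below -/
import Mathlib

section
/- Let Y ⊆ ℝ^{md} be a closed convex set with 0 ∈ Y and let z = (𝐱,𝐲) ∈ X^m × ℝ^{md}. If g_Y(𝐋𝐱, z) ≤ ε < ∞ and ‖𝐋𝐱‖₂ ≤ δ, then 𝐱 is an (ε,δ)-solution of the problem min{F(𝐱) : 𝐱 ∈ X^m, 𝐋𝐱 = 0}. Moreover, in the case Y = ℝ^{md}, for any v ∈ ℝ^{md} such that g(v,z) ≤ ε < ∞ and ‖v‖₂ ≤ δ, one necessarily has v = 𝐋𝐱. -/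
/-!
Common definitions for formalizing "Communication-Efficient Algorithms for
Decentralized and Stochastic Optimization" (Lan, Lee, Zhou).

Vectors in ℝ^d are modeled as `Fin d → ℝ`, and block vectors in ℝ^{md}
(consisting of m blocks of dimension d) as `Fin m → Fin d → ℝ`.
-/

noncomputable section

namespace DCSPaper

open Finset MeasureTheory

/-- Euclidean inner product on ℝ^d. -/
def ipd {d : ℕ} (u v : Fin d → ℝ) : ℝ := ∑ a, u a * v a

/-- Euclidean norm on ℝ^d. -/
def nrmd {d : ℕ} (u : Fin d → ℝ) : ℝ := Real.sqrt (ipd u u)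

/-- Euclidean inner product on ℝ^{md}, in block form. -/
def ipP {m d : ℕ} (x y : Fin m → Fin d → ℝ) : ℝ := ∑ i, ipd (x i) (y i)

/-- Euclidean norm on ℝ^{md}. -/
def nrmP {m d : ℕ} (x : Fin m → Fin d → ℝ) : ℝ := Real.sqrt (ipP x x)

/-- Action of the Kronecker product 𝐋 = L ⊗ I_d on a block vector. -/
def Lmul {m d : ℕ} (L : Matrix (Fin m) (Fin m) ℝ) (x : Fin m → Fin d → ℝ) :
    Fin m → Fin d → ℝ := fun i a => ∑ j, L i j * x j a

/-- The norm on X^m built from the block norms `nX i`:  ‖𝐱‖² = Σ_i ‖x_i‖_{X_i}². -/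
def nrmX {m d : ℕ} (nX : Fin m → (Fin d → ℝ) → ℝ) (x : Fin m → Fin d → ℝ) : ℝ :=
  Real.sqrt (∑ i, (nX i (x i)) ^ 2)

/-- Dual norm of a norm `n` on ℝ^d:  ‖g‖_* = sup {⟨g,u⟩ : ‖u‖ ≤ 1}. -/
def dnrm {d : ℕ} (n : (Fin d → ℝ) → ℝ) (g : Fin d → ℝ) : ℝ :=
  sSup {r | ∃ u, n u ≤ 1 ∧ r = ipd g u}

/-- `n` is a norm on ℝ^d. -/
structure IsNorm {d : ℕ} (n : (Fin d → ℝ) → ℝ) : Prop where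
  nonneg : ∀ u, 0 ≤ n u
  eq_zero_iff : ∀ u, n u = 0 ↔ u = 0
  smul : ∀ (c : ℝ) (u), n (c • u) = |c| * n u
  triangle : ∀ u v, n (u + v) ≤ n u + n v

/-- Bregman distance (prox-function) V(x,u) associated with ω and its gradient map gω. -/
def Breg {d : ℕ} (om : (Fin d → ℝ) → ℝ) (gom : (Fin d → ℝ) → (Fin d → ℝ))
    (x u : Fin d → ℝ) : ℝ := om u - om x - ipd (gom x) (u - x)

/-- 𝐕(𝐱,𝐮) = Σ_i V_i(x_i,u_i). -/
def BregP {m d : ℕ} (om : Fin m → (Fin d → ℝ) → ℝ)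
    (gom : Fin m → (Fin d → ℝ) → (Fin d → ℝ)) (x u : Fin m → Fin d → ℝ) : ℝ :=
  ∑ i, Breg (om i) (gom i) (x i) (u i)

/-- F(𝐱) = Σ_i f_i(x_i). -/
def FF {m d : ℕ} (f : Fin m → (Fin d → ℝ) → ℝ) (x : Fin m → Fin d → ℝ) : ℝ :=
  ∑ i, f i (x i)

/-- The primal-dual gap function Q(z; z̄) with z = (x,y), z̄ = (xb,yb). -/
def Qgap {m d : ℕ} (L : Matrix (Fin m) (Fin m) ℝ) (f : Fin m → (Fin d → ℝ) → ℝ)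
    (x y xb yb : Fin m → Fin d → ℝ) : ℝ :=
  FF f x + ipP (Lmul L x) yb - FF f xb - ipP (Lmul L xb) y

/-- `g` is a subgradient of `f` at `y`, relative to the set `S`. -/
def IsSubgrad {d : ℕ} (f : (Fin d → ℝ) → ℝ) (S : Set (Fin d → ℝ))
    (y g : Fin d → ℝ) : Prop := ∀ x ∈ S, f y + ipd g (x - y) ≤ f x

/-- `f` satisfies (μ/2)‖x-y‖² ≤ f(x) - f(y) - ⟨f'(y),x-y⟩ ≤ M‖x-y‖ on X, w.r.t. norm `n`. -/
def SubgradCond {d : ℕ} (n : (Fin d → ℝ) → ℝ) (X : Set (Fin d → ℝ))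
    (f : (Fin d → ℝ) → ℝ) (μ M : ℝ) : Prop :=
  ∀ y ∈ X, ∀ g, IsSubgrad f X y g → ∀ x ∈ X,
    μ / 2 * (n (x - y)) ^ 2 ≤ f x - f y - ipd g (x - y) ∧
    f x - f y - ipd g (x - y) ≤ M * n (x - y)

/-- `om` is a distance generating function with modulus 1 on X w.r.t. norm `n`,
with (sub)gradient map `gom`: it is convex (with `gom` a gradient/subgradient
selection) and strongly convex with modulus 1 w.r.t. `n`. -/
def IsDGF {d : ℕ} (n : (Fin d → ℝ) → ℝ) (X : Set (Fin d → ℝ))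
    (om : (Fin d → ℝ) → ℝ) (gom : (Fin d → ℝ) → (Fin d → ℝ)) : Prop :=
  (∀ x ∈ X, ∀ u ∈ X, om x + ipd (gom x) (u - x) ≤ om u) ∧
  (∀ x ∈ X, ∀ u ∈ X, (n (x - u)) ^ 2 ≤ ipd (gom x - gom u) (x - u))

/-- (𝐱*,𝐲*) is a saddle point of min_{𝐱∈X^m} max_{𝐲∈ℝ^{md}} F(𝐱) + ⟨𝐋𝐱,𝐲⟩. -/
def IsSaddle {m d : ℕ} (L : Matrix (Fin m) (Fin m) ℝ)
    (f : Fin m → (Fin d → ℝ) → ℝ) (X : Fin m → Set (Fin d → ℝ))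
    (xs ys : Fin m → Fin d → ℝ) : Prop :=
  (∀ i, xs i ∈ X i) ∧
  (∀ y, FF f xs + ipP (Lmul L xs) y ≤ FF f xs + ipP (Lmul L xs) ys) ∧
  (∀ x, (∀ i, x i ∈ X i) → FF f xs + ipP (Lmul L xs) ys ≤ FF f x + ipP (Lmul L x) ys)

/-- 𝐱* is an optimal solution of min{F(𝐱) : 𝐱 ∈ X^m, 𝐋𝐱 = 0}. -/
def IsOptimal {m d : ℕ} (L : Matrix (Fin m) (Fin m) ℝ)
    (f : Fin m → (Fin d → ℝ) → ℝ) (X : Fin m → Set (Fin d → ℝ))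
    (xs : Fin m → Fin d → ℝ) : Prop :=
  (∀ i, xs i ∈ X i) ∧ Lmul L xs = 0 ∧
  ∀ x, (∀ i, x i ∈ X i) → Lmul L x = 0 → FF f xs ≤ FF f x

end DCSPaper

/-!
Because `𝐋𝐱* = 0`, the perturbed gap is affine in `ȳ`:
`Q(z; 𝐱*, ȳ) − ⟨v, ȳ⟩ = F(𝐱) − F(𝐱*) + ⟨𝐋𝐱 − v, ȳ⟩`.
At `ȳ = 0 ∈ Y` this is `F(𝐱) − F(𝐱*)`; and over `Y = ℝ^{md}` the linear part can only be bounded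
above if `𝐋𝐱 − v = 0`.
-/

namespace DCSPaper

section InnerProduct

variable {m d : ℕ}

theorem ipd_eq_dotProduct (u v : Fin d → ℝ) : ipd u v = u ⬝ᵥ v := rfl

@[simp]
theorem ipP_zero_left (x : Fin m → Fin d → ℝ) : ipP 0 x = 0 := by
  simp [ipP, ipd]

@[simp]
theorem ipP_zero_right (x : Fin m → Fin d → ℝ) : ipP x 0 = 0 := by
  simp [ipP, ipd]

theorem ipP_sub_left (x y z : Fin m → Fin d → ℝ) : ipP (x - y) z = ipP x z - ipP y z := by
  simp only [ipP, ipd_eq_dotProduct, Pi.sub_apply, sub_dotProduct, Finset.sum_sub_distrib]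

theorem ipP_smul_right (c : ℝ) (x y : Fin m → Fin d → ℝ) : ipP x (c • y) = c * ipP x y := by
  simp only [ipP, ipd_eq_dotProduct, Pi.smul_apply, dotProduct_smul, smul_eq_mul,
    Finset.mul_sum]

theorem ipd_self_nonneg (u : Fin d → ℝ) : 0 ≤ ipd u u :=
  Finset.sum_nonneg fun a _ => mul_self_nonneg (u a)

theorem ipP_self_nonneg (x : Fin m → Fin d → ℝ) : 0 ≤ ipP x x :=
  Finset.sum_nonneg fun i _ => ipd_self_nonneg (x i)

theorem ipP_self_eq_zero {x : Fin m → Fin d → ℝ} : ipP x x = 0 ↔ x = 0 := by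
  rw [ipP, Finset.sum_eq_zero_iff_of_nonneg fun i _ => ipd_self_nonneg (x i), funext_iff]
  simp only [Finset.mem_univ, true_implies, ipd_eq_dotProduct, dotProduct_self_eq_zero,
    Pi.zero_apply]

/-- Pairing `w` with `t • w` for large `t` contradicts the bound unless `w = 0`. -/
theorem eq_zero_of_forall_ipP_le {w : Fin m → Fin d → ℝ} {C : ℝ} (h : ∀ y, ipP w y ≤ C) :
    w = 0 := by
  by_contra hw
  have hpos : 0 < ipP w w :=
    (ipP_self_nonneg w).lt_of_ne (Ne.symm (mt ipP_self_eq_zero.mp hw))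
  have := h (((C + 1) / ipP w w) • w)
  rw [ipP_smul_right, div_mul_cancel₀ _ hpos.ne'] at this
  linarith

end InnerProduct

theorem Qgap_eq_of_Lmul_eq_zero {m d : ℕ} {L : Matrix (Fin m) (Fin m) ℝ}
    (f : Fin m → (Fin d → ℝ) → ℝ) {xb : Fin m → Fin d → ℝ} (hxb : Lmul L xb = 0)
    (x y yb : Fin m → Fin d → ℝ) :
    Qgap L f x y xb yb = FF f x - FF f xb + ipP (Lmul L x) yb := by
  rw [Qgap, hxb, ipP_zero_left]
  ring

theorem perturbed_gap_gives_approx_solution_general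
    {m d : ℕ}
    (L : Matrix (Fin m) (Fin m) ℝ)
    (X : Fin m → Set (Fin d → ℝ))
    (f : Fin m → (Fin d → ℝ) → ℝ)
    (xs : Fin m → Fin d → ℝ) (hopt : IsOptimal L f X xs)
    (Y : Set (Fin m → Fin d → ℝ))
    (hY0 : (0 : Fin m → Fin d → ℝ) ∈ Y)
    (xx yy : Fin m → Fin d → ℝ)
    (ε δ : ℝ) :
    ((∀ yb ∈ Y, Qgap L f xx yy xs yb - ipP (Lmul L xx) yb ≤ ε) →
      nrmP (Lmul L xx) ≤ δ →
      (FF f xx - FF f xs ≤ ε ∧ nrmP (Lmul L xx) ≤ δ)) ∧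
    (∀ v : Fin m → Fin d → ℝ,
      (∀ yb : Fin m → Fin d → ℝ, Qgap L f xx yy xs yb - ipP v yb ≤ ε) →
      nrmP v ≤ δ → v = Lmul L xx) := by
  have hQ := Qgap_eq_of_Lmul_eq_zero f hopt.2.1 xx yy
  refine ⟨fun hgap hδ => ⟨?_, hδ⟩, fun v hgap _ => ?_⟩
  · simpa [hQ] using hgap 0 hY0
  · have hbdd : ∀ yb, ipP (Lmul L xx - v) yb ≤ ε - (FF f xx - FF f xs) := fun yb => by
      have := hgap yb
      rw [hQ] at this
      rw [ipP_sub_left]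
      linarith
    exact (sub_eq_zero.mp (eq_zero_of_forall_ipP_le hbdd)).symm

/-- Proposition 1 / perturbed gap function and approximate solutions.
If `g_Y(𝐋𝐱, z) ≤ ε` (i.e. `Q(z; 𝐱*, ȳ) − ⟨𝐋𝐱, ȳ⟩ ≤ ε` for all `ȳ ∈ Y`) and `‖𝐋𝐱‖ ≤ δ`,
then `𝐱` is an `(ε,δ)`-solution; and in the case `Y = ℝ^{md}`, any `v` with
`g(v,z) ≤ ε < ∞` and `‖v‖ ≤ δ` satisfies `v = 𝐋𝐱`. -/
theorem perturbed_gap_gives_approx_solution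
    {m d : ℕ} (G : SimpleGraph (Fin m)) [DecidableRel G.Adj] (hG : G.Connected)
    (L : Matrix (Fin m) (Fin m) ℝ) (hL : L = G.lapMatrix ℝ)
    (X : Fin m → Set (Fin d → ℝ))
    (hXconv : ∀ i, Convex ℝ (X i)) (hXcl : ∀ i, IsClosed (X i))
    (hXne : (⋂ i, X i).Nonempty)
    (f : Fin m → (Fin d → ℝ) → ℝ) (hfconv : ∀ i, ConvexOn ℝ (X i) (f i))
    (xs : Fin m → Fin d → ℝ) (hopt : IsOptimal L f X xs)
    (Y : Set (Fin m → Fin d → ℝ)) (hYcl : IsClosed Y) (hYconv : Convex ℝ Y)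
    (hY0 : (0 : Fin m → Fin d → ℝ) ∈ Y)
    (xx yy : Fin m → Fin d → ℝ) (hxx : ∀ i, xx i ∈ X i)
    (ε δ : ℝ) :
    ((∀ yb ∈ Y, Qgap L f xx yy xs yb - ipP (Lmul L xx) yb ≤ ε) →
      nrmP (Lmul L xx) ≤ δ →
      (FF f xx - FF f xs ≤ ε ∧ nrmP (Lmul L xx) ≤ δ)) ∧
    (∀ v : Fin m → Fin d → ℝ,
      (∀ yb : Fin m → Fin d → ℝ, Qgap L f xx yy xs yb - ipP v yb ≤ ε) →
      nrmP v ≤ δ → v = Lmul L xx) :=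
  perturbed_gap_gives_approx_solution_general L X f xs hopt Y hY0 xx yy ε δ

end DCSPaper
end
end

section
/- Let U ⊆ ℝ^n be a convex set, q : U → ℝ a convex function, x̄, ȳ ∈ U points, and μ₁, μ₂ ∈ ℝ scalars. Let ω : U → ℝ be a differentiable convex function and V(x,z) := ω(z) − ω(x) − ⟨∇ω(x), z−x⟩. If u* ∈ argmin{ q(u) + μ₁V(x̄,u) + μ₂V(ȳ,u) : u ∈ U }, then for every u ∈ U: q(u*) + μ₁V(x̄,u*) + μ₂V(ȳ,u*) ≤ q(u) + μ₁V(x̄,u) + μ₂V(ȳ,u) − (μ₁+μ₂)V(u*,u). -/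
noncomputable section

open RealInnerProductSpace

/-- Lemma 6: the three-point lemma for Bregman distances.
If `u*` minimizes `q(u) + μ₁V(x̄,u) + μ₂V(ȳ,u)` over a convex set `U ⊆ ℝ^n`,
where `V` is the Bregman distance of a differentiable convex function `ω` with
gradient map `gω`, then for every `u ∈ U`,
`q(u*) + μ₁V(x̄,u*) + μ₂V(ȳ,u*) ≤ q(u) + μ₁V(x̄,u) + μ₂V(ȳ,u) − (μ₁+μ₂)V(u*,u)`. -/
theorem bregman_three_point_lemma
    {n : ℕ} (U : Set (EuclideanSpace ℝ (Fin n))) (hU : Convex ℝ U)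
    (q : EuclideanSpace ℝ (Fin n) → ℝ) (hq : ConvexOn ℝ U q)
    (xb yb : EuclideanSpace ℝ (Fin n)) (hxb : xb ∈ U) (hyb : yb ∈ U)
    (μ1 μ2 : ℝ)
    (ω : EuclideanSpace ℝ (Fin n) → ℝ)
    (gω : EuclideanSpace ℝ (Fin n) → EuclideanSpace ℝ (Fin n))
    (hωconv : ConvexOn ℝ U ω)
    (hωdiff : ∀ x ∈ U, HasGradientAt ω (gω x) x)
    (V : EuclideanSpace ℝ (Fin n) → EuclideanSpace ℝ (Fin n) → ℝ)
    (hV : ∀ x z, V x z = ω z - ω x - ⟪gω x, z - x⟫)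
    (ustar : EuclideanSpace ℝ (Fin n)) (hustar : ustar ∈ U)
    (hmin : IsMinOn (fun u => q u + μ1 * V xb u + μ2 * V yb u) U ustar) :
    ∀ u ∈ U, q ustar + μ1 * V xb ustar + μ2 * V yb ustar ≤
      q u + μ1 * V xb u + μ2 * V yb u - (μ1 + μ2) * V ustar u := by
  intro u hu
  set v := u - ustar with hv
  have h0 : ustar + (0:ℝ) • v = ustar := by simp
  have hc : HasDerivAt (fun t : ℝ => ustar + t • v) v 0 := by
    simpa using ((hasDerivAt_id (0:ℝ)).smul_const v).const_add ustar
  have hω : HasDerivAt (fun t : ℝ => ω (ustar + t • v)) ⟪gω ustar, v⟫ 0 := by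
    have hf : HasFDerivAt ω ((InnerProductSpace.toDual ℝ _) (gω ustar))
        ((fun t : ℝ => ustar + t • v) 0) := by
      simpa [h0] using (hωdiff ustar hustar).hasFDerivAt
    have h2 := hf.comp_hasDerivAt 0 hc
    simp at h2
    exact h2
  have hlin : ∀ a b : EuclideanSpace ℝ (Fin n),
      HasDerivAt (fun t : ℝ => ⟪a, (ustar + t • v) - b⟫) ⟪a, v⟫ 0 := by
    intro a b
    have heq : ∀ t : ℝ, ⟪a, (ustar + t • v) - b⟫ = ⟪a, ustar - b⟫ + t * ⟪a, v⟫ := by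
      intro t
      rw [show (ustar + t • v) - b = (ustar - b) + t • v by abel, inner_add_right,
        real_inner_smul_right]
    simp only [heq]
    simpa using ((hasDerivAt_id (0:ℝ)).mul_const ⟪a, v⟫).const_add ⟪a, ustar - b⟫
  have hφ : HasDerivAt (fun t : ℝ => μ1 * V xb (ustar + t • v) + μ2 * V yb (ustar + t • v))
      (μ1 * (⟪gω ustar, v⟫ - ⟪gω xb, v⟫) + μ2 * (⟪gω ustar, v⟫ - ⟪gω yb, v⟫)) 0 := by
    simp only [hV]
    have := ((((hω.sub_const (ω xb)).sub (hlin (gω xb) xb)).const_mul μ1).add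
      ((((hω.sub_const (ω yb)).sub (hlin (gω yb) yb)).const_mul μ2)))
    exact this
  have hslope : Filter.Tendsto
      (slope (fun t : ℝ => μ1 * V xb (ustar + t • v) + μ2 * V yb (ustar + t • v)) 0)
      (nhdsWithin 0 (Set.Ioi 0))
      (nhds (μ1 * (⟪gω ustar, v⟫ - ⟪gω xb, v⟫) + μ2 * (⟪gω ustar, v⟫ - ⟪gω yb, v⟫))) :=
    (hasDerivAt_iff_tendsto_slope.mp hφ).mono_left
      (nhdsWithin_mono 0 (fun x hx => Set.mem_compl_singleton_iff.mpr (Set.mem_Ioi.mp hx).ne'))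
  have key : q ustar - q u ≤
      μ1 * (⟪gω ustar, v⟫ - ⟪gω xb, v⟫) + μ2 * (⟪gω ustar, v⟫ - ⟪gω yb, v⟫) := by
    refine ge_of_tendsto hslope ?_
    filter_upwards [Ioc_mem_nhdsGT_of_mem (by norm_num : (0:ℝ) ∈ Set.Ico 0 1)] with t ht
    have heq : (1 - t) • ustar + t • u = ustar + t • v := by rw [hv]; module
    have hmem : ustar + t • v ∈ U := by
      have h' : (1 - t) • ustar + t • u ∈ U :=
        hU hustar hu (by linarith [ht.2]) ht.1.le (by ring)
      rwa [heq] at h'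
    have hqc : q (ustar + t • v) ≤ (1 - t) * q ustar + t * q u := by
      rw [← heq]
      simpa [smul_eq_mul] using hq.2 hustar hu (by linarith [ht.2] : (0:ℝ) ≤ 1 - t)
        (le_of_lt ht.1) (by ring)
    have hm := isMinOn_iff.mp hmin _ hmem
    simp only [slope_def_field, sub_zero, h0]
    rw [le_div_iff₀ ht.1]
    nlinarith [hm, hqc, ht.1.le]
  have split : ∀ a b : EuclideanSpace ℝ (Fin n), ⟪a, u - b⟫ = ⟪a, ustar - b⟫ + ⟪a, v⟫ := by
    intro a b
    rw [← inner_add_right]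
    congr 1
    rw [hv]; abel
  have e1 : V xb u = V xb ustar + V ustar u + (⟪gω ustar, v⟫ - ⟪gω xb, v⟫) := by
    simp only [hV]
    rw [split (gω xb) xb, ← hv]
    ring
  have e2 : V yb u = V yb ustar + V ustar u + (⟪gω ustar, v⟫ - ⟪gω yb, v⟫) := by
    simp only [hV]
    rw [split (gω yb) yb, ← hv]
    ring
  rw [e1, e2]
  linarith [key]
end
end
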